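/- Assume H(X) = H(Y). If there exists an auxiliary random variable U with I(X;Y|U) − I(X;Y) = H(Y|X), then p_X(x) = p_Y(y) for every pair (x,y) with p_{XY}(x,y) > 0. -/

import Mathlib

/-!
Expanding the definitions, `I(X;Y|U) - I(X;Y) - H(Y|X) = -[H(XYU) - H(XU)] - [H(Y) + H(U) - H(YU)]`,
and both brackets are nonnegative, so equality forces `Y` to be a function of `(X,U)` and `U` to be
independent of `Y`. As `H(X) = H(Y)` gives `H(Y|X) = H(X|Y)`, the same holds with `X` and `Y`
exchanged. If `p(x,y) > 0`, pick `u` with `p(x,y,u) > 0`; then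
`p(x)p(u) = p(x,u) = p(x,y,u) = p(y,u) = p(y)p(u)`, so `p(x) = p(y)`.
-/

open scoped BigOperators Pointwise Classical

noncomputable section

namespace GW

/-- A probability mass function on a finite type. -/
def IsPMF {α : Type} [Fintype α] (p : α → ℝ) : Prop :=
  (∀ a, 0 ≤ p a) ∧ ∑ a, p a = 1

/-- Distribution (pmf) of the random variable `f` under the pmf `p`. -/
def dist {α β : Type} [Fintype α] (p : α → ℝ) (f : α → β) : β → ℝ :=
  fun b => ∑ a, if f a = b then p a else 0

/-- Shannon entropy (base 2) of the random variable `f` under the pmf `p`. -/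
def H {α β : Type} [Fintype α] [Fintype β] (p : α → ℝ) (f : α → β) : ℝ :=
  ∑ b, -(dist p f b * Real.logb 2 (dist p f b))

/-- Mutual information `I(f; g)` under `p`. -/
def I2 {α β γ : Type} [Fintype α] [Fintype β] [Fintype γ]
    (p : α → ℝ) (f : α → β) (g : α → γ) : ℝ :=
  H p f + H p g - H p (fun a => (f a, g a))

/-- Conditional entropy `H(f | g)` under `p`. -/
def Hc {α β γ : Type} [Fintype α] [Fintype β] [Fintype γ]
    (p : α → ℝ) (f : α → β) (g : α → γ) : ℝ :=
  H p (fun a => (f a, g a)) - H p g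

/-- Conditional mutual information `I(f; g | h)` under `p`. -/
def Ic {α β γ δ : Type} [Fintype α] [Fintype β] [Fintype γ] [Fintype δ]
    (p : α → ℝ) (f : α → β) (g : α → γ) (h : α → δ) : ℝ :=
  Hc p f h + Hc p g h - Hc p (fun a => (f a, g a)) h

/-- Independence of the random variables `f` and `g` under `p`. -/
def Indep {α β γ : Type} [Fintype α] (p : α → ℝ) (f : α → β) (g : α → γ) : Prop :=
  ∀ b c, dist p (fun a => (f a, g a)) (b, c) = dist p f b * dist p g c

/-- `q` is a joint pmf on `X × Y × U` whose `(X,Y)`-marginal is `p`; i.e. `U` is an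
auxiliary random variable defined jointly with `(X,Y)` via a conditional pmf `p_{U|XY}`. -/
def IsAux {X Y U : Type} [Fintype X] [Fintype Y] [Fintype U]
    (p : X × Y → ℝ) (q : X × Y × U → ℝ) : Prop :=
  IsPMF q ∧ ∀ x y, (∑ u, q (x, y, u)) = p (x, y)

/-- Coordinate map onto `X`. -/
def cX {X Y U : Type} : X × Y × U → X := fun a => a.1
/-- Coordinate map onto `Y`. -/
def cY {X Y U : Type} : X × Y × U → Y := fun a => a.2.1
/-- Coordinate map onto `U`. -/
def cU {X Y U : Type} : X × Y × U → U := fun a => a.2.2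
/-- Coordinate map onto `X × Y`. -/
def cXY {X Y U : Type} : X × Y × U → X × Y := fun a => (a.1, a.2.1)

/-- The mutual information region `𝓘_{XY}`. -/
def MIRegion {X Y : Type} [Fintype X] [Fintype Y] (p : X × Y → ℝ) : Set (ℝ × ℝ × ℝ) :=
  { v | ∃ (U : Type) (_ : Fintype U) (q : X × Y × U → ℝ), IsAux p q ∧
      v = (I2 q cX cU, I2 q cY cU, I2 q cXY cU) }

/-- The outer region `𝓘ᵒ_{XY}`. -/
def OuterRegion {X Y : Type} [Fintype X] [Fintype Y] (p : X × Y → ℝ) : Set (ℝ × ℝ × ℝ) :=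
  { v | 0 ≤ v.1 ∧ 0 ≤ v.2.1 ∧ v.1 + v.2.1 - v.2.2 ≤ I2 p Prod.fst Prod.snd ∧
        0 ≤ v.2.2 - v.2.1 ∧ v.2.2 - v.2.1 ≤ Hc p Prod.fst Prod.snd ∧
        0 ≤ v.2.2 - v.1 ∧ v.2.2 - v.1 ≤ Hc p Prod.snd Prod.fst }

/-- Maximal interaction information `G_NNI(X; Y)`. -/
def GNNI {X Y : Type} [Fintype X] [Fintype Y] (p : X × Y → ℝ) : ℝ :=
  sSup { r | ∃ (U : Type) (_ : Fintype U) (q : X × Y × U → ℝ), IsAux p q ∧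
      r = Ic q cX cY cU - I2 p Prod.fst Prod.snd }

/-- Asymmetric private interaction information `G_PNI(X → Y)`. -/
def GPNI {X Y : Type} [Fintype X] [Fintype Y] (p : X × Y → ℝ) : ℝ :=
  sSup { r | ∃ (U : Type) (_ : Fintype U) (q : X × Y × U → ℝ), IsAux p q ∧
      Indep q cU cX ∧ r = Ic q cX cY cU - I2 p Prod.fst Prod.snd }

/-- Symmetric private interaction information `G_PPI(X; Y)`. -/
def GPPI {X Y : Type} [Fintype X] [Fintype Y] (p : X × Y → ℝ) : ℝ :=
  sSup { r | ∃ (U : Type) (_ : Fintype U) (q : X × Y × U → ℝ), IsAux p q ∧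
      Indep q cU cX ∧ Indep q cU cY ∧ r = Ic q cX cY cU - I2 p Prod.fst Prod.snd }

open Real Finset Function

section Logarithm

variable {b r s t x : ℝ}

theorem mul_logb_sub_logb_le (hb : 1 < b) (hr : 0 < r) (hx : 0 < x) :
    r * (logb b x - logb b r) ≤ (x - r) / log b := by
  have hlog := log_le_sub_one_of_pos (div_pos hx hr)
  rw [log_div hx.ne' hr.ne'] at hlog
  rw [logb, logb, ← sub_div, ← mul_div_assoc]
  refine div_le_div_of_nonneg_right ?_ (log_pos hb).le
  calc r * (log x - log r) ≤ r * (x / r - 1) := by gcongr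
    _ = x - r := by field_simp

theorem mul_logb_sub_logb_lt (hb : 1 < b) (hr : 0 < r) (hx : 0 < x) (hrx : r ≠ x) :
    r * (logb b x - logb b r) < (x - r) / log b := by
  have hlog := log_lt_sub_one_of_pos (div_pos hx hr)
    (by rwa [ne_eq, div_eq_one_iff_eq hr.ne', eq_comm])
  rw [log_div hx.ne' hr.ne'] at hlog
  rw [logb, logb, ← sub_div, ← mul_div_assoc]
  refine div_lt_div_of_pos_right ?_ (log_pos hb)
  calc r * (log x - log r) < r * (x / r - 1) := by gcongr
    _ = x - r := by field_simp

theorem neg_mul_logb_le_of_le (hb : 1 < b) (hr : 0 ≤ r) (hrs : r ≤ s) :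
    -(r * logb b s) ≤ -(r * logb b r) := by
  rcases hr.eq_or_lt with rfl | hr
  · simp
  · exact neg_le_neg (mul_le_mul_of_nonneg_left (logb_le_logb_of_le hb hr hrs) hr.le)

theorem neg_mul_logb_add_le (hb : 1 < b) (hr : 0 ≤ r) (hrs : r ≤ s) (hrt : r ≤ t) :
    -(r * logb b r) + (r - s * t) / log b ≤ -(r * logb b s) - r * logb b t := by
  rcases hr.eq_or_lt with rfl | hr
  · have : 0 ≤ s * t := mul_nonneg hrs hrt
    simpa using div_nonpos_of_nonpos_of_nonneg (neg_nonpos.2 this) (log_pos hb).le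
  · have hs := hr.trans_le hrs
    have ht := hr.trans_le hrt
    have := mul_logb_sub_logb_le hb hr (mul_pos hs ht)
    rw [logb_mul hs.ne' ht.ne'] at this
    linarith [show (r - s * t) / log b = -((s * t - r) / log b) by ring]

theorem eq_mul_of_neg_mul_logb_add_eq (hb : 1 < b) (hr : 0 < r) (hrs : r ≤ s) (hrt : r ≤ t)
    (h : -(r * logb b r) + (r - s * t) / log b = -(r * logb b s) - r * logb b t) :
    r = s * t := by
  have hs := hr.trans_le hrs
  have ht := hr.trans_le hrt
  by_contra hne
  have := mul_logb_sub_logb_lt hb hr (mul_pos hs ht) hne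
  rw [logb_mul hs.ne' ht.ne'] at this
  linarith [show (r - s * t) / log b = -((s * t - r) / log b) by ring]

end Logarithm

section Distribution

variable {α β γ : Type} [Fintype α] (q : α → ℝ)

theorem dist_nonneg {q : α → ℝ} (hq : ∀ a, 0 ≤ q a) (f : α → β) (b : β) : 0 ≤ dist q f b :=
  sum_nonneg fun a _ => by split_ifs <;> simp [hq a]

theorem sum_dist [Fintype β] (f : α → β) : ∑ b, dist q f b = ∑ a, q a := by
  unfold dist
  rw [sum_comm]
  simp

theorem dist_dist [Fintype β] (f : α → β) (g : β → γ) :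
    dist (dist q f) g = dist q (fun a => g (f a)) := by
  ext c
  simp only [dist, ← sum_filter]
  exact (sum_fiberwise_eq_sum_filter _ _ f q).trans (by simp)

theorem dist_apply_of_injective {f : α → β} (hf : Injective f) (a : α) :
    dist q f (f a) = q a := by
  simp [dist, hf.eq_iff]

theorem sum_dist_pair_right [Fintype γ] (f : α → β) (g : α → γ) (b : β) :
    ∑ c, dist q (fun a => (f a, g a)) (b, c) = dist q f b := by
  unfold dist
  rw [sum_comm]
  exact sum_congr rfl fun a _ => by simp [Prod.ext_iff, ite_and]

theorem sum_dist_pair_left [Fintype β] (f : α → β) (g : α → γ) (c : γ) :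
    ∑ b, dist q (fun a => (f a, g a)) (b, c) = dist q g c := by
  unfold dist
  rw [sum_comm]
  exact sum_congr rfl fun a _ => by simp [Prod.ext_iff, ite_and]

variable {q}

theorem dist_pair_le_left [Fintype γ] (hq : ∀ a, 0 ≤ q a) (f : α → β) (g : α → γ)
    (v : β × γ) : dist q (fun a => (f a, g a)) v ≤ dist q f v.1 := by
  rw [← sum_dist_pair_right q f g]
  exact single_le_sum (f := fun c => dist q (fun a => (f a, g a)) (v.1, c))
    (fun c _ => dist_nonneg hq _ _) (mem_univ v.2)

theorem dist_pair_le_right [Fintype β] (hq : ∀ a, 0 ≤ q a) (f : α → β) (g : α → γ)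
    (v : β × γ) : dist q (fun a => (f a, g a)) v ≤ dist q g v.2 := by
  rw [← sum_dist_pair_left q f g]
  exact single_le_sum (f := fun b => dist q (fun a => (f a, g a)) (b, v.2))
    (fun b _ => dist_nonneg hq _ _) (mem_univ v.1)

end Distribution

section Entropy

variable {α β γ δ : Type} [Fintype α] [Fintype β] [Fintype γ] (q : α → ℝ)

theorem H_dist (k : α → β) (f : β → γ) : H (dist q k) f = H q (fun a => f (k a)) := by
  simp only [H, dist_dist]

theorem I2_dist [Fintype δ] (k : α → β) (f : β → γ) (g : β → δ) :
    I2 (dist q k) f g = I2 q (fun a => f (k a)) (fun a => g (k a)) := by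
  simp only [I2, H_dist]

theorem Hc_dist [Fintype δ] (k : α → β) (f : β → γ) (g : β → δ) :
    Hc (dist q k) f g = Hc q (fun a => f (k a)) (fun a => g (k a)) := by
  simp only [Hc, H_dist]

theorem H_comp_of_injective [Fintype δ] {e : β → δ} (he : Injective e) (f : α → β) :
    H q (fun a => e (f a)) = H q f := by
  have hrange : ∀ d ∉ Set.range e, dist q (fun a => e (f a)) d = 0 := fun d hd =>
    sum_eq_zero fun a _ => if_neg fun h => hd ⟨f a, h⟩
  refine (Fintype.sum_of_injective e he _ _ (fun d hd => ?_) fun b => ?_).symm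
  · simp [hrange d hd]
  · simp [dist, he.eq_iff]

theorem H_pair_comm (f : α → β) (g : α → γ) :
    H q (fun a => (f a, g a)) = H q (fun a => (g a, f a)) :=
  (H_comp_of_injective q Prod.swap_injective _).symm

theorem I2_comm (f : α → β) (g : α → γ) : I2 q f g = I2 q g f := by
  rw [I2, I2, H_pair_comm q f g]
  ring

theorem Ic_comm [Fintype δ] (f : α → β) (g : α → γ) (h : α → δ) :
    Ic q f g h = Ic q g f h := by
  have : H q (fun a => ((f a, g a), h a)) = H q (fun a => ((g a, f a), h a)) :=
    (H_comp_of_injective q (Prod.swap_injective.prodMap injective_id) _).symm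
  simp only [Ic, Hc, this]
  ring

theorem Hc_sub_Hc (f : α → β) (g : α → γ) : Hc q f g - Hc q g f = H q f - H q g := by
  rw [Hc, Hc, H_pair_comm q f g]
  ring

theorem H_eq_sum_pair_left (f : α → β) (g : α → γ) :
    H q f = ∑ v : β × γ, -(dist q (fun a => (f a, g a)) v * logb 2 (dist q f v.1)) := by
  rw [H, Fintype.sum_prod_type]
  refine sum_congr rfl fun b _ => ?_
  dsimp only
  rw [sum_neg_distrib, ← sum_mul, sum_dist_pair_right]

theorem H_eq_sum_pair_right (f : α → β) (g : α → γ) :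
    H q g = ∑ v : β × γ, -(dist q (fun a => (f a, g a)) v * logb 2 (dist q g v.2)) := by
  rw [H, Fintype.sum_prod_type_right]
  refine sum_congr rfl fun c _ => ?_
  dsimp only
  rw [sum_neg_distrib, ← sum_mul, sum_dist_pair_left]

variable {q}

theorem H_le_H_pair (hq : ∀ a, 0 ≤ q a) (f : α → β) (g : α → γ) :
    H q f ≤ H q (fun a => (f a, g a)) := by
  rw [H_eq_sum_pair_left q f g, H]
  exact sum_le_sum fun v _ =>
    neg_mul_logb_le_of_le one_lt_two (dist_nonneg hq _ v) (dist_pair_le_left hq f g v)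

theorem dist_pair_eq_of_H_pair_eq (hq : ∀ a, 0 ≤ q a) {f : α → β} {g : α → γ}
    (h : H q (fun a => (f a, g a)) = H q f) {v : β × γ}
    (hv : 0 < dist q (fun a => (f a, g a)) v) :
    dist q (fun a => (f a, g a)) v = dist q f v.1 := by
  rw [H_eq_sum_pair_left q f g, H] at h
  have hterm := (sum_eq_sum_iff_of_le fun v _ => neg_mul_logb_le_of_le one_lt_two
    (dist_nonneg hq _ v) (dist_pair_le_left hq f g v)).1 h.symm v (mem_univ v)
  refine logb_injOn_pos one_lt_two hv (hv.trans_le (dist_pair_le_left hq f g v)) ?_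
  exact (mul_left_cancel₀ hv.ne' (neg_injective hterm)).symm

theorem H_add_H_eq_sum_pair (f : α → β) (g : α → γ) :
    H q f + H q g = ∑ v : β × γ, (-(dist q (fun a => (f a, g a)) v * logb 2 (dist q f v.1))
      - dist q (fun a => (f a, g a)) v * logb 2 (dist q g v.2)) := by
  rw [H_eq_sum_pair_left q f g, H_eq_sum_pair_right q f g, ← sum_add_distrib]
  exact sum_congr rfl fun v _ => by ring

/-- The correction term sums to `1 - 1 = 0`; it makes the Gibbs inequality hold termwise. -/
theorem H_pair_eq_sum_gibbs (hq : IsPMF q) (f : α → β) (g : α → γ) :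
    H q (fun a => (f a, g a)) = ∑ v : β × γ, (-(dist q (fun a => (f a, g a)) v *
      logb 2 (dist q (fun a => (f a, g a)) v)) +
        (dist q (fun a => (f a, g a)) v - dist q f v.1 * dist q g v.2) / log 2) := by
  have hprod : ∑ v : β × γ, dist q f v.1 * dist q g v.2 = 1 := by
    rw [Fintype.sum_prod_type, ← Fintype.sum_mul_sum, sum_dist, sum_dist, hq.2, one_mul]
  rw [sum_add_distrib, ← sum_div, sum_sub_distrib, sum_dist, hq.2, hprod, sub_self, zero_div,
    add_zero, H]

theorem H_pair_le_add (hq : IsPMF q) (f : α → β) (g : α → γ) :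
    H q (fun a => (f a, g a)) ≤ H q f + H q g := by
  rw [H_pair_eq_sum_gibbs hq, H_add_H_eq_sum_pair]
  exact sum_le_sum fun v _ => neg_mul_logb_add_le one_lt_two (dist_nonneg hq.1 _ v)
    (dist_pair_le_left hq.1 f g v) (dist_pair_le_right hq.1 f g v)

theorem dist_pair_eq_mul_of_H_pair_eq_add (hq : IsPMF q) {f : α → β} {g : α → γ}
    (h : H q (fun a => (f a, g a)) = H q f + H q g) {v : β × γ}
    (hv : 0 < dist q (fun a => (f a, g a)) v) :
    dist q (fun a => (f a, g a)) v = dist q f v.1 * dist q g v.2 := by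
  rw [H_pair_eq_sum_gibbs hq, H_add_H_eq_sum_pair] at h
  have hterm := (sum_eq_sum_iff_of_le fun v _ => neg_mul_logb_add_le one_lt_two
    (dist_nonneg hq.1 _ v) (dist_pair_le_left hq.1 f g v)
    (dist_pair_le_right hq.1 f g v)).1 h v (mem_univ v)
  exact eq_mul_of_neg_mul_logb_add_eq one_lt_two hv (dist_pair_le_left hq.1 f g v)
    (dist_pair_le_right hq.1 f g v) hterm

end Entropy

section Interaction

variable {α β γ δ : Type} [Fintype α] [Fintype β] [Fintype γ] [Fintype δ] {q : α → ℝ}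
  {f : α → β} {g : α → γ} {h : α → δ}

theorem H_eq_of_Ic_sub_I2_eq_Hc (hq : IsPMF q) (heq : Ic q f g h - I2 q f g = Hc q g f) :
    H q (fun a => ((f a, h a), g a)) = H q (fun a => (f a, h a)) ∧
      H q (fun a => (g a, h a)) = H q g + H q h := by
  have hassoc : H q (fun a => ((f a, h a), g a)) = H q (fun a => ((f a, g a), h a)) :=
    H_comp_of_injective q (e := fun v => ((v.1.1, v.2), v.1.2))
      (fun v w hvw => by simp_all [Prod.ext_iff]) (fun a => ((f a, g a), h a))
  have hdet := H_le_H_pair hq.1 (fun a => (f a, h a)) g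
  have hind := H_pair_le_add hq g h
  have hcomm := H_pair_comm q f g
  simp only [Ic, I2, Hc] at heq
  constructor <;> linarith

theorem mul_dist_eq_of_H_eq (hq : IsPMF q) (hinj : Injective fun a => ((f a, h a), g a))
    (hdet : H q (fun a => ((f a, h a), g a)) = H q (fun a => (f a, h a)))
    (hind : H q (fun a => (f a, h a)) = H q f + H q h) {a : α} (ha : 0 < q a) :
    dist q f (f a) * dist q h (h a) = q a := by
  have hfgh := dist_apply_of_injective q hinj a
  have hfh : dist q (fun a => (f a, h a)) (f a, h a) = q a :=
    hfgh ▸ (dist_pair_eq_of_H_pair_eq hq.1 hdet (hfgh ▸ ha)).symm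
  rw [← hfh]
  exact (dist_pair_eq_mul_of_H_pair_eq_add hq hind (hfh ▸ ha)).symm

end Interaction

theorem dist_cXY_of_isAux {X Y U : Type} [Fintype X] [Fintype Y] [Fintype U]
    {p : X × Y → ℝ} {q : X × Y × U → ℝ} (hq : IsAux p q) : dist q cXY = p := by
  ext ⟨x, y⟩
  rw [← hq.2]
  simp only [dist, cXY, Prod.ext_iff, ite_and, Fintype.sum_prod_type, sum_ite_irrel,
    sum_const_zero, sum_ite_eq', mem_univ, ↓reduceIte]
  rw [Fintype.sum_eq_single y fun y' hy' => by simp [hy']]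
  simp

theorem stmt14_general {X Y : Type} [Fintype X] [Fintype Y] (p : X × Y → ℝ)
    (hH : H p Prod.fst = H p Prod.snd)
    {U : Type} [Fintype U] (q : X × Y × U → ℝ) (hq : IsAux p q)
    (hmax : Ic q cX cY cU - I2 p Prod.fst Prod.snd = Hc p Prod.snd Prod.fst) :
    ∀ x y, 0 < p (x, y) → dist p Prod.fst x = dist p Prod.snd y := by
  intro x y hxy
  obtain ⟨u, hu⟩ : ∃ u, 0 < q (x, y, u) := by
    simpa using exists_lt_of_sum_lt (s := univ) (f := fun _ => 0) (by simpa [hq.2] using hxy)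
  obtain rfl := dist_cXY_of_isAux hq
  rw [dist_dist, dist_dist]
  have hXY : Ic q cX cY cU - I2 q cX cY = Hc q cY cX := by rwa [I2_dist, Hc_dist] at hmax
  have hH' : H q cX = H q cY := by rwa [H_dist, H_dist] at hH
  have hYX : Ic q cY cX cU - I2 q cY cX = Hc q cX cY := by
    linarith [Ic_comm q cX cY cU, I2_comm q cX cY, Hc_sub_Hc q cX cY]
  obtain ⟨hdetY, hindY⟩ := H_eq_of_Ic_sub_I2_eq_Hc hq.1 hXY
  obtain ⟨hdetX, hindX⟩ := H_eq_of_Ic_sub_I2_eq_Hc hq.1 hYX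
  -- determinism comes from one equality case, independence from the other
  have hX : dist q cX x * dist q cU u = q (x, y, u) :=
    mul_dist_eq_of_H_eq hq.1 (fun a b hab => by simp_all [cX, cY, cU, Prod.ext_iff])
      hdetY hindX hu
  have hY : dist q cY y * dist q cU u = q (x, y, u) :=
    mul_dist_eq_of_H_eq hq.1 (fun a b hab => by simp_all [cX, cY, cU, Prod.ext_iff])
      hdetX hindY hu
  exact mul_right_cancel₀ (right_ne_zero_of_mul (hX ▸ hu.ne')) (hX.trans hY.symm)

/-- if `H(X) = H(Y)` and some auxiliary `U` attains
`I(X;Y|U) − I(X;Y) = H(Y|X)`, then `p_X(x) = p_Y(y)` whenever `p(x,y) > 0`. -/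
theorem stmt14 {X Y : Type} [Fintype X] [Fintype Y] (p : X × Y → ℝ) (hp : IsPMF p)
    (hH : H p Prod.fst = H p Prod.snd)
    {U : Type} [Fintype U] (q : X × Y × U → ℝ) (hq : IsAux p q)
    (hmax : Ic q cX cY cU - I2 p Prod.fst Prod.snd = Hc p Prod.snd Prod.fst) :
    ∀ x y, 0 < p (x, y) → dist p Prod.fst x = dist p Prod.snd y :=
  stmt14_general p hH q hq hmax

end GW
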